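/- Let V be a vector space over ℚ with dim V = 3 and let τ ∈ GL(V) be an element of finite order such that τ has no nonzero fixed vector. Then −1 is an eigenvalue of τ, i.e. there exists a nonzero v ∈ V with τ·v = −v. -/

import Mathlib

open Polynomial Module

/-- Evaluating the characteristic polynomial of a matrix. -/
lemma aux_eval_charpoly {n : Type*} [DecidableEq n] [Fintype n] {K : Type*} [Field K]
    (M : Matrix n n K) (μ : K) :
    M.charpoly.eval μ = (Matrix.scalar n μ - M).det := by
  rw [Matrix.charpoly, eval_det, Matrix.matPolyEquiv_charmatrix]
  simp

/-- A root (in the base field) of the characteristic polynomial is an eigenvalue. -/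
lemma aux_exists_eigen {K V : Type*} [Field K] [AddCommGroup V] [Module K V]
    [FiniteDimensional K V] (f : V →ₗ[K] V) {μ : K}
    (h : (LinearMap.charpoly f).eval μ = 0) :
    ∃ v : V, v ≠ 0 ∧ f v = μ • v := by
  classical
  let b := Module.finBasis K V
  have h1 : (LinearMap.toMatrix b b f).charpoly = f.charpoly := f.charpoly_toMatrix b
  have h2 : (Matrix.scalar _ μ - LinearMap.toMatrix b b f).det = 0 := by
    rw [← aux_eval_charpoly, h1, h]
  have hscal : Matrix.scalar _ μ = LinearMap.toMatrix b b (μ • (1 : V →ₗ[K] V)) := by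
    rw [map_smul, LinearMap.toMatrix_one]
    ext i j
    by_cases hij : i = j <;>
      simp [Matrix.scalar_apply, Matrix.diagonal_apply, hij, Matrix.one_apply]
  have h3 : LinearMap.det (μ • (1 : V →ₗ[K] V) - f) = 0 := by
    rw [← LinearMap.det_toMatrix b, map_sub, ← hscal, h2]
  have h4 := LinearMap.bot_lt_ker_of_det_eq_zero h3
  obtain ⟨v, hv, hv0⟩ := (Submodule.ne_bot_iff _).mp h4.ne'
  refine ⟨v, hv0, ?_⟩
  have := LinearMap.mem_ker.mp hv
  simp only [LinearMap.sub_apply, LinearMap.smul_apply, Module.End.one_apply] at this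
  linear_combination (norm := module) -this


lemma aux_pow {K W : Type*} [CommSemiring K] [AddCommMonoid W] [Module K W]
    (g : W →ₗ[K] W) (x : K) (w : W) (h : g w = x • w) :
    ∀ k : ℕ, (g ^ k) w = x ^ k • w
  | 0 => by simp
  | (k + 1) => by
    rw [pow_succ, Module.End.mul_apply, h, map_smul, aux_pow g x w h k, smul_smul, ← pow_succ']

/-- From the proof of Lemma 3.1 (case N = 3): an element of finite order of `GL(V)`,
`dim_ℚ V = 3`, with no nonzero fixed vector has `-1` as an eigenvalue. -/
theorem stmt_5 {V : Type*} [AddCommGroup V] [Module ℚ V]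
    (hdim : Module.finrank ℚ V = 3)
    (τ : (V →ₗ[ℚ] V)ˣ) (hord : IsOfFinOrder τ)
    (hfix : ∀ v : V, (τ : V →ₗ[ℚ] V) v = v → v = 0) :
    ∃ v : V, v ≠ 0 ∧ (τ : V →ₗ[ℚ] V) v = -v := by
  have hfd : FiniteDimensional ℚ V := FiniteDimensional.of_finrank_pos (by rw [hdim]; norm_num)
  set f : V →ₗ[ℚ] V := (τ : V →ₗ[ℚ] V) with hf
  obtain ⟨n, hn, hτn⟩ := isOfFinOrder_iff_pow_eq_one.mp hord
  have hfn : f ^ n = 1 := by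
    have := congrArg Units.val hτn
    rwa [Units.val_pow_eq_pow_val, Units.val_one] at this
  -- 1 is not a root of the charpoly
  have h1 : f.charpoly.eval 1 ≠ 0 := by
    intro h
    obtain ⟨v, hv0, hv⟩ := aux_exists_eigen f h
    exact hv0 (hfix v (by simpa using hv))
  -- suffices: -1 is a root
  suffices hroot : f.charpoly.eval (-1) = 0 by
    obtain ⟨v, hv0, hv⟩ := aux_exists_eigen f hroot
    exact ⟨v, hv0, by simpa [neg_one_smul] using hv⟩
  -- pass to ℝ
  set P : ℝ[X] := f.charpoly.map (algebraMap ℚ ℝ) with hP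
  have hPmonic : P.Monic := f.charpoly_monic.map _
  have hPdeg : P.natDegree = 3 := by
    rw [hP, natDegree_map, f.charpoly_natDegree, hdim]
  -- every real root of P is an n-th root of unity
  have key : ∀ x : ℝ, P.eval x = 0 → x ^ n = 1 := by
    intro x hx
    have hPc : (f.baseChange ℝ).charpoly = P := f.charpoly_baseChange ℝ
    obtain ⟨w, hw0, hw⟩ := aux_exists_eigen (f.baseChange ℝ) (μ := x) (by rw [hPc]; exact hx)
    have hgn : (f.baseChange ℝ) ^ n = 1 := by
      rw [← LinearMap.baseChange_pow, hfn, LinearMap.baseChange_one]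
    have hpow : ((f.baseChange ℝ) ^ n) w = x ^ n • w := aux_pow _ x w hw n
    rw [hgn, Module.End.one_apply] at hpow
    have hzero : (x ^ n - 1) • w = 0 := by
      have hcalc : (x ^ n - 1) • w = x ^ n • w - w := by module
      rw [hcalc, ← hpow, sub_self]
    rcases smul_eq_zero.mp hzero with h | h
    · exact sub_eq_zero.mp h
    · exact absurd h hw0
  -- P has a real root by IVT
  have hPdegpos : 0 < P.degree := by
    rw [← natDegree_pos_iff_degree_pos, hPdeg]; norm_num
  obtain ⟨x, hx⟩ : ∃ x : ℝ, P.eval x = 0 := by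
    -- positive value at large argument
    have htop : Filter.Tendsto (fun x : ℝ => P.eval x) Filter.atTop Filter.atTop :=
      P.tendsto_atTop_of_leadingCoeff_nonneg hPdegpos (by rw [hPmonic.leadingCoeff]; norm_num)
    -- negative value at large negative argument, via composition with -X
    set Q : ℝ[X] := P.comp (-X) with hQ
    have hQdeg : Q.natDegree = 3 := by
      rw [hQ, natDegree_comp]
      simp [hPdeg]
    have hQlc : Q.leadingCoeff = -1 := by
      rw [hQ, leadingCoeff_comp (by simp)]
      simp [hPmonic.leadingCoeff, hPdeg]
      norm_num
    have hbot : Filter.Tendsto (fun x : ℝ => Q.eval x) Filter.atTop Filter.atBot :=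
      Q.tendsto_atBot_of_leadingCoeff_nonpos
        (by rw [← natDegree_pos_iff_degree_pos, hQdeg]; norm_num) (by rw [hQlc]; norm_num)
    obtain ⟨a, ha⟩ := (hbot.eventually_lt_atBot 0).exists
    have ha' : P.eval (-a) < 0 := by
      rw [hQ] at ha
      simpa [eval_comp] using ha
    obtain ⟨b, hb1, hb2⟩ :=
      ((Filter.eventually_ge_atTop (-a)).and (htop.eventually_gt_atTop 0)).exists
    have hcont : ContinuousOn (fun x : ℝ => P.eval x) (Set.Icc (-a) b) :=
      P.continuous_aeval.continuousOn
    have h0mem : (0 : ℝ) ∈ Set.Icc (P.eval (-a)) (P.eval b) := ⟨ha'.le, hb2.le⟩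
    obtain ⟨x, _, hx⟩ := intermediate_value_Icc hb1 hcont h0mem
    exact ⟨x, hx⟩
  -- x = ±1
  have hxn := key x hx
  have hxpm : x = 1 ∨ x = -1 := by
    rcases pow_eq_one_iff_cases.mp hxn with h | h | h
    · omega
    · left; exact h
    · right; exact h.1
  -- rule out x = 1, conclude
  have hmapeval : ∀ q : ℚ, P.eval ((q : ℝ)) = (algebraMap ℚ ℝ) (f.charpoly.eval q) := by
    intro q
    have hq : ((q : ℝ)) = algebraMap ℚ ℝ q := rfl
    rw [hq, hP, eval_map, eval₂_hom]
  rcases hxpm with rfl | rfl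
  · exfalso
    apply h1
    have := hmapeval 1
    rw [Rat.cast_one, hx] at this
    exact (algebraMap ℚ ℝ).injective (by simpa using this.symm)
  · have := hmapeval (-1)
    rw [Rat.cast_neg, Rat.cast_one, hx] at this
    exact (algebraMap ℚ ℝ).injective (by simpa using this.symm)
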